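/- arXiv:1701.02134 — 8 statements merged into one kernel-verified Lean document; each statement's English description precedes it below -/
import Mathlib

section
/- Let U ⊆ ℝ² be open and connected, let x : U → ℝ³ be twice continuously differentiable with continuous functions λ, μ : U → ℝ satisfying x_{uv} = λ x_u + μ x_v on U, and suppose B_M(x_u, x_v) = 0 on U. If the function G := B_M(x_v, x_v) vanishes at some point (u₀, v₀) ∈ U, then G(u, v₀) = 0 for every u with (u, v₀) in U lying in the same horizontal segment of U through (u₀, v₀); that is, the induced metric degenerates along the whole parameter curve v = v₀ through that point. (Paper: Lemma 2.2.) -/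
/-! Along the parameter curve `v = v₀`, symmetry of second derivatives gives
`G_u = 2 B_M(x_{uv}, x_v)`, and conjugacy together with orthogonality turns this into
`G_u = 2 μ G`. Thus `t ↦ G(t, v₀)` solves a linear ODE with continuous coefficient, and by
uniqueness of solutions it vanishes identically once it vanishes at `u₀`. -/

/-- The Minkowski bilinear form on `ℝ³ = ℝ × ℝ × ℝ`. -/
def BM (x y : ℝ × ℝ × ℝ) : ℝ := x.1 * y.1 + x.2.1 * y.2.1 - x.2.2 * y.2.2

/-- Partial derivative in the `u`-direction. -/
noncomputable def pdu (x : ℝ × ℝ → ℝ × ℝ × ℝ) (p : ℝ × ℝ) : ℝ × ℝ × ℝ :=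
  fderiv ℝ x p (1, 0)

/-- Partial derivative in the `v`-direction. -/
noncomputable def pdv (x : ℝ × ℝ → ℝ × ℝ × ℝ) (p : ℝ × ℝ) : ℝ × ℝ × ℝ :=
  fderiv ℝ x p (0, 1)

/-- Mixed second partial derivative `x_{uv}`. -/
noncomputable def pduv (x : ℝ × ℝ → ℝ × ℝ × ℝ) (p : ℝ × ℝ) : ℝ × ℝ × ℝ :=
  fderiv ℝ (fun q => fderiv ℝ x q (1, 0)) p (0, 1)

open Set

theorem eq_zero_of_hasDerivAt_smul_self {E : Type*} [NormedAddCommGroup E] [NormedSpace ℝ E]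
    {c : ℝ → ℝ} {g : ℝ → E} {a b : ℝ}
    (hc : ContinuousOn c (uIcc a b)) (hg : ∀ t ∈ uIcc a b, HasDerivAt g (c t • g t) t)
    (ha : g a = 0) : g b = 0 := by
  obtain ⟨K, hK⟩ := isCompact_uIcc.exists_bound_of_continuousOn hc
  have hlip : ∀ t ∈ uIcc a b, LipschitzOnWith K.toNNReal (c t • · : E → E) univ := fun t ht =>
    ((lipschitzWith_smul (c t)).weaken <| by
      rw [← NNReal.coe_le_coe, coe_nnnorm]
      exact (hK t ht).trans K.le_coe_toNNReal).lipschitzOnWith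
  have hgc : ContinuousOn g (uIcc a b) := HasDerivAt.continuousOn hg
  have hzero : ∀ t (s : Set ℝ), HasDerivWithinAt (fun _ => (0 : E)) (c t • (0 : E)) s t := by
    simpa using fun t s => hasDerivWithinAt_const t s (0 : E)
  rcases le_total a b with hab | hba
  · rw [uIcc_of_le hab] at hlip hgc hg
    exact ODE_solution_unique_of_mem_Icc_right (s := fun _ => univ)
      (fun t ht => hlip t (Ico_subset_Icc_self ht)) hgc
      (fun t ht => (hg t (Ico_subset_Icc_self ht)).hasDerivWithinAt) (fun _ _ => trivial)
      continuousOn_const (fun t _ => hzero t _) (fun _ _ => trivial) ha ⟨hab, le_rfl⟩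
  · rw [uIcc_of_ge hba] at hlip hgc hg
    exact ODE_solution_unique_of_mem_Icc_left (s := fun _ => univ)
      (fun t ht => hlip t (Ioc_subset_Icc_self ht)) hgc
      (fun t ht => (hg t (Ioc_subset_Icc_self ht)).hasDerivWithinAt) (fun _ _ => trivial)
      continuousOn_const (fun t _ => hzero t _) (fun _ _ => trivial) ha ⟨le_rfl, hba⟩

theorem BM_comm (y z : ℝ × ℝ × ℝ) : BM y z = BM z y := by
  simp only [BM]; ring

theorem BM_smul_add_smul_left (a b : ℝ) (y z w : ℝ × ℝ × ℝ) :
    BM (a • y + b • z) w = a * BM y w + b * BM z w := by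
  simp only [BM, Prod.fst_add, Prod.snd_add, Prod.smul_fst, Prod.smul_snd, smul_eq_mul]; ring

theorem HasDerivAt.BM {f g : ℝ → ℝ × ℝ × ℝ} {f' g' : ℝ × ℝ × ℝ} {t : ℝ}
    (hf : HasDerivAt f f' t) (hg : HasDerivAt g g' t) :
    HasDerivAt (fun s => BM (f s) (g s)) (BM f' (g t) + BM (f t) g') t := by
  have hfst {h : ℝ → ℝ × ℝ × ℝ} {h'} (hh : HasDerivAt h h' t) :
      HasDerivAt (fun s => (h s).1) h'.1 t := by
    simpa using hh.hasFDerivAt.fst.hasDerivAt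
  have hsnd_fst {h : ℝ → ℝ × ℝ × ℝ} {h'} (hh : HasDerivAt h h' t) :
      HasDerivAt (fun s => (h s).2.1) h'.2.1 t := by
    simpa using hh.hasFDerivAt.snd.fst.hasDerivAt
  have hsnd_snd {h : ℝ → ℝ × ℝ × ℝ} {h'} (hh : HasDerivAt h h' t) :
      HasDerivAt (fun s => (h s).2.2) h'.2.2 t := by
    simpa using hh.hasFDerivAt.snd.snd.hasDerivAt
  unfold _root_.BM
  exact ((((hfst hf).mul (hfst hg)).add ((hsnd_fst hf).mul (hsnd_fst hg))).sub
    ((hsnd_snd hf).mul (hsnd_snd hg))).congr_deriv (by ring)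

theorem hasDerivAt_pdv_horizontal {x : ℝ × ℝ → ℝ × ℝ × ℝ} {p : ℝ × ℝ}
    (hx : ContDiffAt ℝ 2 x p) : HasDerivAt (fun t => pdv x (t, p.2)) (pduv x p) p.1 := by
  have hdx : DifferentiableAt ℝ (fderiv ℝ x) p :=
    (hx.fderiv_right (m := 1) le_rfl).differentiableAt one_ne_zero
  have hline : HasDerivAt (fun t : ℝ => (t, p.2)) ((1 : ℝ), (0 : ℝ)) p.1 :=
    (hasDerivAt_id _).prodMk (hasDerivAt_const _ _)
  have hpduv : pduv x p = fderiv ℝ (fderiv ℝ x) p (1, 0) (0, 1) := by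
    rw [pduv, fderiv_clm_apply hdx (differentiableAt_const _)]
    simpa using hx.isSymmSndFDerivAt (by simp) _ _
  have hFline := hdx.hasFDerivAt.comp_hasDerivAt p.1 hline
  have h := hFline.clm_apply (hasDerivAt_const p.1 ((0 : ℝ), (1 : ℝ)))
  rw [map_zero, add_zero, ← hpduv] at h
  exact h

theorem hasDerivAt_BM_pdv_self_horizontal {x : ℝ × ℝ → ℝ × ℝ × ℝ} {p : ℝ × ℝ} {l m : ℝ}
    (hx : ContDiffAt ℝ 2 x p) (hconj : pduv x p = l • pdu x p + m • pdv x p)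
    (horth : BM (pdu x p) (pdv x p) = 0) :
    HasDerivAt (fun t => BM (pdv x (t, p.2)) (pdv x (t, p.2)))
      (2 * m * BM (pdv x p) (pdv x p)) p.1 := by
  have h := hasDerivAt_pdv_horizontal hx
  refine (h.BM h).congr_deriv ?_
  rw [BM_comm (pdv x _) (pduv x p), hconj, BM_smul_add_smul_left, horth]
  ring

theorem degenerate_along_parameter_curve_general
    (U : Set (ℝ × ℝ)) (hUopen : IsOpen U)
    (x : ℝ × ℝ → ℝ × ℝ × ℝ) (hx : ContDiffOn ℝ 2 x U)
    (lam mu : ℝ × ℝ → ℝ) (hmu : ContinuousOn mu U)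
    (hconj : ∀ p ∈ U, pduv x p = lam p • pdu x p + mu p • pdv x p)
    (horth : ∀ p ∈ U, BM (pdu x p) (pdv x p) = 0)
    (G : ℝ × ℝ → ℝ) (hG : ∀ p, G p = BM (pdv x p) (pdv x p))
    (u₀ v₀ : ℝ) (hG₀ : G (u₀, v₀) = 0) :
    ∀ u : ℝ, (∀ t ∈ Set.uIcc u₀ u, (t, v₀) ∈ U) → G (u, v₀) = 0 := by
  intro u hseg
  simp only [hG] at hG₀ ⊢
  refine eq_zero_of_hasDerivAt_smul_self (c := fun t => 2 * mu (t, v₀))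
    (g := fun t => BM (pdv x (t, v₀)) (pdv x (t, v₀))) ?_ (fun t ht => ?_) hG₀
  · exact continuousOn_const.mul (hmu.comp (by fun_prop) hseg)
  · have hp := hseg t ht
    exact hasDerivAt_BM_pdv_self_horizontal (hx.contDiffAt (hUopen.mem_nhds hp)) (hconj _ hp)
      (horth _ hp)

/-- **Lemma 2.2.** For an orthogonal conjugate parametrization `x` of a surface patch in
Minkowski space, if the metric coefficient `G = B_M(x_v, x_v)` vanishes at a point, then it
vanishes along the whole horizontal parameter curve `v = v₀` through that point (as far as the
horizontal segment stays inside `U`). -/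
theorem degenerate_along_parameter_curve
    (U : Set (ℝ × ℝ)) (hUopen : IsOpen U) (hUconn : IsConnected U)
    (x : ℝ × ℝ → ℝ × ℝ × ℝ) (hx : ContDiffOn ℝ 2 x U)
    (lam mu : ℝ × ℝ → ℝ) (hlam : ContinuousOn lam U) (hmu : ContinuousOn mu U)
    (hconj : ∀ p ∈ U, pduv x p = lam p • pdu x p + mu p • pdv x p)
    (horth : ∀ p ∈ U, BM (pdu x p) (pdv x p) = 0)
    (G : ℝ × ℝ → ℝ) (hG : ∀ p, G p = BM (pdv x p) (pdv x p))
    (u₀ v₀ : ℝ) (h₀ : (u₀, v₀) ∈ U) (hG₀ : G (u₀, v₀) = 0) :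
    ∀ u : ℝ, (∀ t ∈ Set.uIcc u₀ u, (t, v₀) ∈ U) → G (u, v₀) = 0 :=
  degenerate_along_parameter_curve_general U hUopen x hx lam mu hmu hconj horth G hG u₀ v₀ hG₀
end

section
/- Let U ⊆ ℝ² be open and connected, let x, x* : U → ℝ³ be twice continuously differentiable and ρ : U → ℝ continuously differentiable and nowhere zero, with x*_u = ρ x_u and x*_v = −ρ x_v on U. Then 2ρ x_{uv} + ρ_v x_u + ρ_u x_v = 0 on U; in particular, at every point x_{uv} lies in the span of {x_u, x_v} and x*_{uv} lies in the span of {x*_u, x*_v}, so (u, v) are common conjugate parameters for x and x*. If moreover B is a symmetric bilinear form on ℝ³ with B(x_u, x_v) = 0 on U, then also B(x*_u, x*_v) = 0, B(x*_u, x*_u) = ρ² B(x_u, x_u) and B(x*_v, x*_v) = ρ² B(x_v, x_v) on U, i.e. (x, x*) is a Christoffel pair with common curvature line parameters (u, v). (Paper: Lemma 3.2.) -/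
/-- Partial derivatives of a scalar function. -/
noncomputable def spdu (f : ℝ × ℝ → ℝ) (p : ℝ × ℝ) : ℝ := fderiv ℝ f p (1, 0)
noncomputable def spdv (f : ℝ × ℝ → ℝ) (p : ℝ × ℝ) : ℝ := fderiv ℝ f p (0, 1)

open Filter Topology Submodule

section Calculus

variable {𝕜 : Type*} [NontriviallyNormedField 𝕜]
  {E : Type*} [NormedAddCommGroup E] [NormedSpace 𝕜 E]
  {F : Type*} [NormedAddCommGroup F] [NormedSpace 𝕜 F]
  {f : E → F} {x : E} {n : WithTop ℕ∞}

theorem ContDiffAt.differentiableAt_fderiv_apply (hf : ContDiffAt 𝕜 n f x) (hn : 2 ≤ n) (v : E) :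
    DifferentiableAt 𝕜 (fun y => fderiv 𝕜 f y v) x :=
  ((hf.fderiv_right (m := 1) (by simpa [one_add_one_eq_two] using hn)).differentiableAt
    one_ne_zero).clm_apply (differentiableAt_const v)

/-- The Lie bracket of two constant vector fields vanishes. -/
theorem ContDiffAt.fderiv_fderiv_apply_comm (hf : ContDiffAt 𝕜 n f x)
    (hn : minSmoothness 𝕜 2 ≤ n) (v w : E) :
    fderiv 𝕜 (fun y => fderiv 𝕜 f y v) x w = fderiv 𝕜 (fun y => fderiv 𝕜 f y w) x v := by
  have h := VectorField.fderiv_apply_lieBracket hf hn (V := fun _ => w) (W := fun _ => v)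
    (differentiableAt_const _) (differentiableAt_const _)
  rw [← sub_eq_zero, ← h]
  simp [VectorField.lieBracket]

theorem Filter.EventuallyEq.fderiv_apply_eq_smul_add {g : E → F} {c : E → 𝕜}
    (h : g =ᶠ[𝓝 x] fun y => c y • f y) (hc : DifferentiableAt 𝕜 c x)
    (hf : DifferentiableAt 𝕜 f x) (v : E) :
    fderiv 𝕜 g x v = c x • fderiv 𝕜 f x v + fderiv 𝕜 c x v • f x := by
  rw [h.fderiv_eq, fderiv_fun_smul hc hf]
  rfl

end Calculus

section Span

variable {K M : Type*} [Field K] [AddCommGroup M] [Module K M] {u v w : M} {a b c : K}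

theorem mem_span_pair_of_smul_add_smul_add_smul_eq_zero (hc : c ≠ 0)
    (h : c • w + a • u + b • v = 0) : w ∈ span K {u, v} :=
  mem_span_pair.2 ⟨-(a / c), -(b / c), by
    linear_combination (norm := skip) (-c⁻¹) • h
    match_scalars <;> field_simp <;> ring⟩

theorem span_smul_pair_of_ne_zero (ha : a ≠ 0) (hb : b ≠ 0) :
    span K {a • u, b • v} = span K {u, v} := by
  rw [span_insert, span_insert, span_singleton_smul_eq ha.isUnit,
    span_singleton_smul_eq hb.isUnit]

end Span

section Surfaces

variable {x xs : ℝ × ℝ → ℝ × ℝ × ℝ} {σ : ℝ × ℝ → ℝ} {p : ℝ × ℝ}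

theorem pduv_eq_fderiv_pdv (hx : ContDiffAt ℝ 2 x p) : pduv x p = fderiv ℝ (pdv x) p (1, 0) :=
  hx.fderiv_fderiv_apply_comm (by simp) _ _

theorem pduv_eq_of_pdu_eventuallyEq_smul (hx : ContDiffAt ℝ 2 x p) (hσ : DifferentiableAt ℝ σ p)
    (h : pdu xs =ᶠ[𝓝 p] fun q => σ q • pdu x q) :
    pduv xs p = σ p • pduv x p + spdv σ p • pdu x p :=
  h.fderiv_apply_eq_smul_add hσ (hx.differentiableAt_fderiv_apply le_rfl _) _

theorem pduv_eq_of_pdv_eventuallyEq_smul (hx : ContDiffAt ℝ 2 x p) (hxs : ContDiffAt ℝ 2 xs p)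
    (hσ : DifferentiableAt ℝ σ p) (h : pdv xs =ᶠ[𝓝 p] fun q => σ q • pdv x q) :
    pduv xs p = σ p • pduv x p + spdu σ p • pdv x p := by
  rw [pduv_eq_fderiv_pdv hxs, pduv_eq_fderiv_pdv hx]
  exact h.fderiv_apply_eq_smul_add hσ (hx.differentiableAt_fderiv_apply le_rfl _) _

theorem spdu_neg (σ : ℝ × ℝ → ℝ) (p : ℝ × ℝ) : spdu (-σ) p = -spdu σ p := by
  simp [spdu, fderiv_neg]

theorem two_mul_smul_pduv_add_eq_zero (hx : ContDiffAt ℝ 2 x p) (hxs : ContDiffAt ℝ 2 xs p)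
    (hσ : DifferentiableAt ℝ σ p) (hu : pdu xs =ᶠ[𝓝 p] fun q => σ q • pdu x q)
    (hv : pdv xs =ᶠ[𝓝 p] fun q => -σ q • pdv x q) :
    (2 * σ p) • pduv x p + spdv σ p • pdu x p + spdu σ p • pdv x p = 0 := by
  have hxs_u := pduv_eq_of_pdu_eventuallyEq_smul hx hσ hu
  have hxs_v := pduv_eq_of_pdv_eventuallyEq_smul hx hxs hσ.neg hv
  rw [spdu_neg, Pi.neg_apply] at hxs_v
  linear_combination (norm := module) hxs_v - hxs_u

end Surfaces

theorem christoffel_pair_criterion_general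
    (U : Set (ℝ × ℝ)) (hUopen : IsOpen U)
    (x xs : ℝ × ℝ → ℝ × ℝ × ℝ) (hx : ContDiffOn ℝ 2 x U) (hxs : ContDiffOn ℝ 2 xs U)
    (ρ : ℝ × ℝ → ℝ) (hρ : ContDiffOn ℝ 1 ρ U) (hρ0 : ∀ p ∈ U, ρ p ≠ 0)
    (hu : ∀ p ∈ U, pdu xs p = ρ p • pdu x p)
    (hv : ∀ p ∈ U, pdv xs p = -(ρ p) • pdv x p) :
    (∀ p ∈ U,
      (2 * ρ p) • pduv x p + spdv ρ p • pdu x p + spdu ρ p • pdv x p = 0) ∧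
    (∀ p ∈ U, pduv x p ∈ Submodule.span ℝ {pdu x p, pdv x p}) ∧
    (∀ p ∈ U, pduv xs p ∈ Submodule.span ℝ {pdu xs p, pdv xs p}) ∧
    (∀ B : LinearMap.BilinForm ℝ (ℝ × ℝ × ℝ), (∀ ξ η, B ξ η = B η ξ) →
      (∀ p ∈ U, B (pdu x p) (pdv x p) = 0) →
      (∀ p ∈ U, B (pdu xs p) (pdv xs p) = 0) ∧
      (∀ p ∈ U, B (pdu xs p) (pdu xs p) = (ρ p) ^ 2 * B (pdu x p) (pdu x p)) ∧
      (∀ p ∈ U, B (pdv xs p) (pdv xs p) = (ρ p) ^ 2 * B (pdv x p) (pdv x p))) := by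
  have hx' : ∀ p ∈ U, ContDiffAt ℝ 2 x p := fun p hp => hx.contDiffAt (hUopen.mem_nhds hp)
  have hxs' : ∀ p ∈ U, ContDiffAt ℝ 2 xs p := fun p hp => hxs.contDiffAt (hUopen.mem_nhds hp)
  have hρ' : ∀ p ∈ U, DifferentiableAt ℝ ρ p := fun p hp =>
    (hρ.contDiffAt (hUopen.mem_nhds hp)).differentiableAt one_ne_zero
  have hu' : ∀ p ∈ U, pdu xs =ᶠ[𝓝 p] fun q => ρ q • pdu x q := fun p hp =>
    eventually_of_mem (hUopen.mem_nhds hp) hu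
  have hv' : ∀ p ∈ U, pdv xs =ᶠ[𝓝 p] fun q => -ρ q • pdv x q := fun p hp =>
    eventually_of_mem (hUopen.mem_nhds hp) hv
  have key : ∀ p ∈ U, (2 * ρ p) • pduv x p + spdv ρ p • pdu x p + spdu ρ p • pdv x p = 0 :=
    fun p hp => two_mul_smul_pduv_add_eq_zero (hx' p hp) (hxs' p hp) (hρ' p hp) (hu' p hp) (hv' p hp)
  have hspan : ∀ p ∈ U, pduv x p ∈ span ℝ {pdu x p, pdv x p} := fun p hp =>
    mem_span_pair_of_smul_add_smul_add_smul_eq_zero (mul_ne_zero two_ne_zero (hρ0 p hp)) (key p hp)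
  refine ⟨key, hspan, fun p hp => ?_, fun B _ hB => ⟨fun p hp => ?_, fun p hp => ?_, fun p hp => ?_⟩⟩
  · rw [hu p hp, hv p hp, span_smul_pair_of_ne_zero (hρ0 p hp) (neg_ne_zero.2 (hρ0 p hp)),
      pduv_eq_of_pdu_eventuallyEq_smul (hx' p hp) (hρ' p hp) (hu' p hp)]
    exact add_mem (smul_mem _ _ (hspan p hp)) (smul_mem _ _ (subset_span (Set.mem_insert _ _)))
  · simp [hu p hp, hv p hp, hB p hp]
  · simp only [hu p hp, map_smul, LinearMap.smul_apply, smul_eq_mul]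
    ring
  · simp only [hv p hp, map_smul, LinearMap.smul_apply, smul_eq_mul]
    ring

/-- **Lemma 3.2.** If the differentials of two surfaces `x` and `x*` are related by
`x*_u = ρ x_u`, `x*_v = −ρ x_v`, then `2ρ x_{uv} + ρ_v x_u + ρ_u x_v = 0`, so `(u,v)` are
common conjugate parameters; and if moreover `(u,v)` are orthogonal for some symmetric
bilinear form `B`, then `(x, x*)` is a Christoffel pair with common curvature line
parameters. -/
theorem christoffel_pair_criterion
    (U : Set (ℝ × ℝ)) (hUopen : IsOpen U) (hUconn : IsConnected U)
    (x xs : ℝ × ℝ → ℝ × ℝ × ℝ) (hx : ContDiffOn ℝ 2 x U) (hxs : ContDiffOn ℝ 2 xs U)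
    (ρ : ℝ × ℝ → ℝ) (hρ : ContDiffOn ℝ 1 ρ U) (hρ0 : ∀ p ∈ U, ρ p ≠ 0)
    (hu : ∀ p ∈ U, pdu xs p = ρ p • pdu x p)
    (hv : ∀ p ∈ U, pdv xs p = -(ρ p) • pdv x p) :
    (∀ p ∈ U,
      (2 * ρ p) • pduv x p + spdv ρ p • pdu x p + spdu ρ p • pdv x p = 0) ∧
    (∀ p ∈ U, pduv x p ∈ Submodule.span ℝ {pdu x p, pdv x p}) ∧
    (∀ p ∈ U, pduv xs p ∈ Submodule.span ℝ {pdu xs p, pdv xs p}) ∧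
    (∀ B : LinearMap.BilinForm ℝ (ℝ × ℝ × ℝ), (∀ ξ η, B ξ η = B η ξ) →
      (∀ p ∈ U, B (pdu x p) (pdv x p) = 0) →
      (∀ p ∈ U, B (pdu xs p) (pdv xs p) = 0) ∧
      (∀ p ∈ U, B (pdu xs p) (pdu xs p) = (ρ p) ^ 2 * B (pdu x p) (pdu x p)) ∧
      (∀ p ∈ U, B (pdv xs p) (pdv xs p) = (ρ p) ^ 2 * B (pdv x p) (pdv x p))) :=
  christoffel_pair_criterion_general U hUopen x xs hx hxs ρ hρ hρ0 hu hv
end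

section
/- Let B be a nondegenerate symmetric bilinear form on ℝ³, let U ⊆ ℝ² be open, and let x : U → ℝ³ be twice continuously differentiable with B(x, x) = c constant on U, where c ≠ 0. Suppose at a point w₀ ∈ U the three vectors x(w₀), x_u(w₀), x_v(w₀) are linearly independent. Then x_{uv}(w₀) lies in the span of {x_u(w₀), x_v(w₀)} if and only if B(x_u(w₀), x_v(w₀)) = 0; that is, on a central quadric {B(x,x) = c}, parameters are conjugate exactly when they are orthogonal. (Paper: Section 2, key observation, using 0 = ∂_u B(x, x_v) = B(x_u, x_v) + B(x, x_{uv}).) -/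
/-!
Differentiating `B(x, x) = c` gives `B(x, x_u) = B(x, x_v) = 0`, i.e. `x_u, x_v` span the
`B`-orthogonal complement of `x`. Differentiating `B(x, x_u) = 0` once more in `v` gives
`B(x_v, x_u) + B(x, x_{uv}) = 0`. Since `B(x, x) = c ≠ 0` and `x, x_u, x_v` is a basis, the
span of `x_u, x_v` is exactly the kernel of `B(x, ·)`, so `x_{uv}` lies in it iff
`B(x_u, x_v) = 0`.
-/

open Filter Topology

section Calculus

variable {𝕜 : Type*} [NontriviallyNormedField 𝕜] [CompleteSpace 𝕜]
  {E : Type*} [NormedAddCommGroup E] [NormedSpace 𝕜 E] [FiniteDimensional 𝕜 E]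
  {F : Type*} [NormedAddCommGroup F] [NormedSpace 𝕜 F]

theorem LinearMap.BilinForm.apply_fderiv_add_apply_fderiv_eq_zero (B : LinearMap.BilinForm 𝕜 E)
    {f g : F → E} {p : F} {c : 𝕜} (hf : DifferentiableAt 𝕜 f p) (hg : DifferentiableAt 𝕜 g p)
    (hconst : (fun q => B (f q) (g q)) =ᶠ[𝓝 p] fun _ => c) (h : F) :
    B (fderiv 𝕜 f p h) (g p) + B (f p) (fderiv 𝕜 g p h) = 0 := by
  have hderiv := B.toContinuousBilinearMap.fderiv_of_bilinear hf hg
  simp only [LinearMap.toContinuousBilinearMap_apply, hconst.fderiv_eq, fderiv_const_apply]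
    at hderiv
  simpa [add_comm] using (DFunLike.congr_fun hderiv h).symm

theorem LinearMap.BilinForm.apply_fderiv_eq_zero_of_eventually_const [CharZero 𝕜]
    {B : LinearMap.BilinForm 𝕜 E} (hB : B.IsSymm) {f : F → E} {p : F} {c : 𝕜}
    (hf : DifferentiableAt 𝕜 f p) (hconst : (fun q => B (f q) (f q)) =ᶠ[𝓝 p] fun _ => c)
    (h : F) : B (f p) (fderiv 𝕜 f p h) = 0 := by
  have hsum := B.apply_fderiv_add_apply_fderiv_eq_zero hf hf hconst h
  rw [hB.eq (fderiv 𝕜 f p h), ← two_mul] at hsum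
  exact (mul_eq_zero.1 hsum).resolve_left two_ne_zero

end Calculus

theorem Submodule.mem_span_iff_apply_eq_zero {K V : Type*} [Field K] [AddCommGroup V] [Module K V]
    {S : Set V} {x : V} (hspan : Submodule.span K (insert x S) = ⊤) (φ : Module.Dual K V)
    (hx : φ x ≠ 0) (hS : ∀ s ∈ S, φ s = 0) (z : V) :
    z ∈ Submodule.span K S ↔ φ z = 0 := by
  have hker : Submodule.span K S ≤ LinearMap.ker φ := Submodule.span_le.2 hS
  refine ⟨fun hz => hker hz, fun hz => ?_⟩
  obtain ⟨a, w, hw, rfl⟩ := Submodule.mem_span_insert.1 (hspan ▸ Submodule.mem_top (x := z))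
  have ha : a * φ x = 0 := by simpa [LinearMap.mem_ker.1 (hker hw)] using hz
  rw [(mul_eq_zero.1 ha).resolve_right hx, zero_smul, zero_add]
  exact hw

theorem conjugate_iff_orthogonal_on_quadric_general
    (B : LinearMap.BilinForm ℝ (ℝ × ℝ × ℝ))
    (hBsymm : ∀ ξ η, B ξ η = B η ξ)
    (U : Set (ℝ × ℝ)) (hUopen : IsOpen U)
    (x : ℝ × ℝ → ℝ × ℝ × ℝ) (hx : ContDiffOn ℝ 2 x U)
    (c : ℝ) (hc : c ≠ 0) (hquad : ∀ p ∈ U, B (x p) (x p) = c)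
    (w₀ : ℝ × ℝ) (hw₀ : w₀ ∈ U)
    (hind : LinearIndependent ℝ ![x w₀, pdu x w₀, pdv x w₀]) :
    pduv x w₀ ∈ Submodule.span ℝ {pdu x w₀, pdv x w₀} ↔
      B (pdu x w₀) (pdv x w₀) = 0 := by
  have hdiff : ∀ p ∈ U, DifferentiableAt ℝ x p := fun p hp =>
    (hx.differentiableOn two_ne_zero).differentiableAt (hUopen.mem_nhds hp)
  have htangent : ∀ p ∈ U, ∀ h, B (x p) (fderiv ℝ x p h) = 0 := fun p hp =>
    LinearMap.BilinForm.apply_fderiv_eq_zero_of_eventually_const ⟨hBsymm⟩ (hdiff p hp)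
      (eventually_of_mem (hUopen.mem_nhds hp) hquad)
  have hdiff_u : DifferentiableAt ℝ (fun q => fderiv ℝ x q (1, 0)) w₀ := by
    have hfderiv : ContDiffOn ℝ 1 (fderiv ℝ x) U := hx.fderiv_of_isOpen hUopen (by norm_num)
    exact ((hfderiv.differentiableOn one_ne_zero).differentiableAt
      (hUopen.mem_nhds hw₀)).clm_apply (differentiableAt_const _)
  have hmixed : B (pdv x w₀) (pdu x w₀) + B (x w₀) (pduv x w₀) = 0 :=
    B.apply_fderiv_add_apply_fderiv_eq_zero (hdiff w₀ hw₀) hdiff_u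
      (eventually_of_mem (hUopen.mem_nhds hw₀) fun q hq => htangent q hq (1, 0)) (0, 1)
  have hspan : Submodule.span ℝ (insert (x w₀) {pdu x w₀, pdv x w₀}) = ⊤ := by
    rw [← hind.span_eq_top_of_card_eq_finrank (by simp), Matrix.range_cons, Matrix.range_cons_cons_empty, Set.singleton_union]
  rw [Submodule.mem_span_iff_apply_eq_zero hspan (B (x w₀)) (by rwa [hquad w₀ hw₀])
    (by simpa using ⟨htangent w₀ hw₀ (1, 0), htangent w₀ hw₀ (0, 1)⟩), hBsymm (pdu x w₀)]
  constructor <;> intro h <;> linarith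

/-- **Section 2, key observation.** On a central quadric `{B(x,x) = c}` (with `c ≠ 0`),
parameters are conjugate exactly when they are orthogonal: at a point where
`x, x_u, x_v` are linearly independent, `x_{uv}` lies in the span of `x_u, x_v` if and
only if `B(x_u, x_v) = 0`. -/
theorem conjugate_iff_orthogonal_on_quadric
    (B : LinearMap.BilinForm ℝ (ℝ × ℝ × ℝ))
    (hBsymm : ∀ ξ η, B ξ η = B η ξ) (hBnd : B.Nondegenerate)
    (U : Set (ℝ × ℝ)) (hUopen : IsOpen U)
    (x : ℝ × ℝ → ℝ × ℝ × ℝ) (hx : ContDiffOn ℝ 2 x U)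
    (c : ℝ) (hc : c ≠ 0) (hquad : ∀ p ∈ U, B (x p) (x p) = c)
    (w₀ : ℝ × ℝ) (hw₀ : w₀ ∈ U)
    (hind : LinearIndependent ℝ ![x w₀, pdu x w₀, pdv x w₀]) :
    pduv x w₀ ∈ Submodule.span ℝ {pdu x w₀, pdv x w₀} ↔
      B (pdu x w₀) (pdv x w₀) = 0 :=
  conjugate_iff_orthogonal_on_quadric_general B hBsymm U hUopen x hx c hc hquad w₀ hw₀ hind
end

section
/- For all real numbers a, b, c with a > b > 0 and c > 0, the following chain of strict inequalities holds: ((√(a² + c²) − √(b² + c²))/√(a² − b²))² < ((√(a² + c²) − c)/a)² < 1 < ((√(a² + c²) + c)/a)² < ((√(a² + c²) + √(b² + c²))/√(a² − b²))². (Paper: Section 2; this shows the umbilics of an ellipsoid in Minkowski space lie in its spacelike part.) -/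
/-- **Section 2.** The chain of strict inequalities showing that the umbilics of an
ellipsoid in Minkowski space lie in its spacelike part. -/
theorem umbilics_in_spacelike_part
    (a b c : ℝ) (hab : b < a) (hb : 0 < b) (hc : 0 < c) :
    ((Real.sqrt (a ^ 2 + c ^ 2) - Real.sqrt (b ^ 2 + c ^ 2)) /
        Real.sqrt (a ^ 2 - b ^ 2)) ^ 2 <
      ((Real.sqrt (a ^ 2 + c ^ 2) - c) / a) ^ 2 ∧
    ((Real.sqrt (a ^ 2 + c ^ 2) - c) / a) ^ 2 < 1 ∧
    (1 : ℝ) < ((Real.sqrt (a ^ 2 + c ^ 2) + c) / a) ^ 2 ∧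
    ((Real.sqrt (a ^ 2 + c ^ 2) + c) / a) ^ 2 <
      ((Real.sqrt (a ^ 2 + c ^ 2) + Real.sqrt (b ^ 2 + c ^ 2)) /
        Real.sqrt (a ^ 2 - b ^ 2)) ^ 2 := by
  have ha : 0 < a := hb.trans hab
  set A := Real.sqrt (a ^ 2 + c ^ 2) with hA
  set B := Real.sqrt (b ^ 2 + c ^ 2) with hB
  set D := Real.sqrt (a ^ 2 - b ^ 2) with hD
  have hA2 : A ^ 2 = a ^ 2 + c ^ 2 := Real.sq_sqrt (by positivity)
  have hB2 : B ^ 2 = b ^ 2 + c ^ 2 := Real.sq_sqrt (by positivity)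
  have hab2 : 0 < a ^ 2 - b ^ 2 := by nlinarith
  have hD2 : D ^ 2 = a ^ 2 - b ^ 2 := Real.sq_sqrt hab2.le
  have hApos : 0 < A := Real.sqrt_pos.2 (by positivity)
  have hBpos : 0 < B := Real.sqrt_pos.2 (by positivity)
  have hDpos : 0 < D := Real.sqrt_pos.2 hab2
  have hAB : B < A := by
    apply Real.sqrt_lt_sqrt (by positivity); nlinarith
  have hcB : c < B := by nlinarith
  have hcA : c < A := hcB.trans hAB
  have haA : a < A := by nlinarith
  refine ⟨?_, ?_, ?_, ?_⟩
  · rw [div_pow, div_pow, div_lt_div_iff₀ (by positivity) (by positivity)]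
    rw [hD2]
    have key : 0 < (A - B) * (A - c) * (2 * A * (B - c)) :=
      mul_pos (mul_pos (sub_pos.2 hAB) (sub_pos.2 hcA)) (by nlinarith)
    nlinarith [key, hA2, hB2]
  · rw [div_pow, div_lt_one (by positivity)]
    nlinarith
  · rw [div_pow, lt_div_iff₀ (by positivity)]
    nlinarith
  · rw [div_pow, div_pow, div_lt_div_iff₀ (by positivity) (by positivity)]
    rw [hD2]
    have h1 : (A + c) ^ 2 * (a ^ 2 - b ^ 2) < (A + c) ^ 2 * a ^ 2 :=
      mul_lt_mul_of_pos_left (by nlinarith) (by positivity)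
    have h2 : (A + c) ^ 2 * a ^ 2 ≤ (A + B) ^ 2 * a ^ 2 :=
      mul_le_mul_of_nonneg_right (by nlinarith) (by positivity)
    linarith
end

section
/- Let p, q ∈ (0, 1) with p² + q² = 1, and let y ∈ ℂ satisfy p(1 + y²) + 2y ≠ 0 and p(1 + y²) − 2y ≠ 0. Then q² · cosh( ln( |p(1 + y²) + 2y| / |p(1 + y²) − 2y| ) ) + cos( arg( (p(1 − y²) − 2qy) / (p(1 − y²) + 2qy) ) ) − p² · cosh( ln( |(1 − y²) + q(1 + y²)| / |(1 − y²) − q(1 + y²)| ) ) = 0, all divisions being well defined since (1 − y²)² − q²(1 + y²)² = (p(1 + y²) + 2y)(p(1 + y²) − 2y) ≠ 0 implies that p(1 − y²) ± 2qy ≠ 0 and (1 − y²) ± q(1 + y²) ≠ 0. -/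
/-- **Implicit representation (implell) of the Scherk tower**, evaluated pointwise in the
Weierstrass data `y`: `q² cosh px*₁ + cos pqx*₂ − p² cosh qx*₃ = 0`. -/
theorem scherk_tower_implicit
    (p q : ℝ) (hp : p ∈ Set.Ioo (0 : ℝ) 1) (hq : q ∈ Set.Ioo (0 : ℝ) 1)
    (hpq : p ^ 2 + q ^ 2 = 1)
    (y : ℂ)
    (h₁ : (p : ℂ) * (1 + y ^ 2) + 2 * y ≠ 0)
    (h₂ : (p : ℂ) * (1 + y ^ 2) - 2 * y ≠ 0) :
    q ^ 2 * Real.cosh (Real.log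
        (‖(p : ℂ) * (1 + y ^ 2) + 2 * y‖ /
          ‖(p : ℂ) * (1 + y ^ 2) - 2 * y‖))
      + Real.cos (Complex.arg
          (((p : ℂ) * (1 - y ^ 2) - 2 * (q : ℂ) * y) /
            ((p : ℂ) * (1 - y ^ 2) + 2 * (q : ℂ) * y)))
      - p ^ 2 * Real.cosh (Real.log
          (‖(1 - y ^ 2) + (q : ℂ) * (1 + y ^ 2)‖ /
            ‖(1 - y ^ 2) - (q : ℂ) * (1 + y ^ 2)‖)) = 0 := by
  obtain ⟨hp0, hp1⟩ := hp
  obtain ⟨hq0, hq1⟩ := hq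
  set A : ℂ := (p : ℂ) * (1 + y ^ 2) + 2 * y with hA
  set B : ℂ := (p : ℂ) * (1 + y ^ 2) - 2 * y with hB
  set C : ℂ := (p : ℂ) * (1 - y ^ 2) - 2 * (q : ℂ) * y with hC
  set D : ℂ := (p : ℂ) * (1 - y ^ 2) + 2 * (q : ℂ) * y with hD
  set E : ℂ := (1 - y ^ 2) + (q : ℂ) * (1 + y ^ 2) with hE
  set F : ℂ := (1 - y ^ 2) - (q : ℂ) * (1 + y ^ 2) with hF
  have hpqC : (p : ℂ) ^ 2 + (q : ℂ) ^ 2 = 1 := by exact_mod_cast hpq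
  have hCD : C * D = A * B := by
    rw [hA, hB, hC, hD]; linear_combination (-4 * y ^ 2) * hpqC
  have hEF : E * F = A * B := by
    rw [hA, hB, hE, hF]; linear_combination (-(1 + y ^ 2) ^ 2) * hpqC
  have hAB : A * B ≠ 0 := mul_ne_zero h₁ h₂
  have hC0 : C ≠ 0 := fun h => hAB (by rw [← hCD, h, zero_mul])
  have hD0 : D ≠ 0 := fun h => hAB (by rw [← hCD, h, mul_zero])
  have hE0 : E ≠ 0 := fun h => hAB (by rw [← hEF, h, zero_mul])
  have hF0 : F ≠ 0 := fun h => hAB (by rw [← hEF, h, mul_zero])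
  set a := ‖A‖ with ha
  set b := ‖B‖ with hb
  set c := ‖C‖ with hc
  set d := ‖D‖ with hd
  set e := ‖E‖ with he
  set f := ‖F‖ with hf
  have ha0 : 0 < a := norm_pos_iff.2 h₁
  have hb0 : 0 < b := norm_pos_iff.2 h₂
  have hc0 : 0 < c := norm_pos_iff.2 hC0
  have hd0 : 0 < d := norm_pos_iff.2 hD0
  have he0 : 0 < e := norm_pos_iff.2 hE0
  have hf0 : 0 < f := norm_pos_iff.2 hF0
  have hcdab : c * d = a * b := by
    rw [ha, hb, hc, hd, ← norm_mul, ← norm_mul, hCD]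
  have hefab : e * f = a * b := by
    rw [ha, hb, he, hf, ← norm_mul, ← norm_mul, hEF]
  -- cosh terms
  rw [Real.cosh_log (div_pos ha0 hb0), Real.cosh_log (div_pos he0 hf0)]
  -- cos term
  rw [Complex.cos_arg (div_ne_zero hC0 hD0)]
  have hdivre : (C / D).re = (C * (starRingEnd ℂ) D).re / d ^ 2 := by
    have h1 : C / D = (C * (starRingEnd ℂ) D) * ((Complex.normSq D : ℝ) : ℂ)⁻¹ := by
      rw [div_eq_mul_inv, Complex.inv_def, ← mul_assoc, Complex.ofReal_inv]
    rw [h1, hd, Complex.sq_norm]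
    simp [Complex.mul_re, Complex.normSq_pos.2 hD0]
    ring
  have habs : ‖C / D‖ = c / d := norm_div _ _
  rw [hdivre, habs]
  -- key identity
  have hconj : (starRingEnd ℂ) C * D = (starRingEnd ℂ) (C * (starRingEnd ℂ) D) := by
    rw [map_mul, Complex.conj_conj]
  have hcplx : (q : ℂ) ^ 2 * (A * (starRingEnd ℂ) A + B * (starRingEnd ℂ) B)
      + (C * (starRingEnd ℂ) D + (starRingEnd ℂ) C * D)
      - (p : ℂ) ^ 2 * (E * (starRingEnd ℂ) E + F * (starRingEnd ℂ) F) = 0 := by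
    rw [hA, hB, hC, hD, hE, hF]
    simp only [map_add, map_sub, map_mul, map_pow, map_one, map_ofNat,
      Complex.conj_ofReal]
    ring
  rw [Complex.mul_conj, Complex.mul_conj, Complex.mul_conj, Complex.mul_conj,
    hconj, Complex.add_conj] at hcplx
  have hnum : q ^ 2 * (a ^ 2 + b ^ 2) + 2 * (C * (starRingEnd ℂ) D).re
      - p ^ 2 * (e ^ 2 + f ^ 2) = 0 := by
    have := hcplx
    rw [ha, hb, he, hf, Complex.sq_norm, Complex.sq_norm, Complex.sq_norm,
      Complex.sq_norm]
    exact_mod_cast this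
  -- finish with field arithmetic
  have e1 : (a / b + (a / b)⁻¹) / 2 = (a ^ 2 + b ^ 2) / (2 * (a * b)) := by
    rw [inv_div]; field_simp
  have e2 : (e / f + (e / f)⁻¹) / 2 = (e ^ 2 + f ^ 2) / (2 * (e * f)) := by
    rw [inv_div]; field_simp
  have e3 : (C * (starRingEnd ℂ) D).re / d ^ 2 / (c / d)
      = 2 * (C * (starRingEnd ℂ) D).re / (2 * (c * d)) := by
    rw [div_div_eq_mul_div]; field_simp
  rw [e1, e2, e3, hcdab, hefab]
  generalize hR : (C * (starRingEnd ℂ) D).re = R at hnum ⊢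
  have hm : (2 * (a * b)) ≠ 0 := by positivity
  field_simp
  linear_combination hnum
end

section
/- Let p, q ∈ (0, 1) with p² + q² = 1, and let y ∈ ℂ satisfy p(1 − y²) + 2iy ≠ 0 and p(1 − y²) − 2iy ≠ 0. Then q² · cos( arg( (p(1 − y²) + 2iy) / (p(1 − y²) − 2iy) ) ) + cosh( ln( |p(1 + y²) − 2iqy| / |p(1 + y²) + 2iqy| ) ) − p² · cosh( ln( |(1 + y²) + q(1 − y²)| / |(1 + y²) − q(1 − y²)| ) ) = 0, all divisions being well defined since (p(1 − y²) + 2iy)(p(1 − y²) − 2iy) = (1 + y²)² − q²(1 − y²)² ≠ 0 implies p(1 + y²) ± 2iqy ≠ 0 and (1 + y²) ± q(1 − y²) ≠ 0. (Paper: implicit representation (impl2hyp), case p < 1, of the maximal surface dual to the 2-sheeted hyperboloid: q² cos px*₁ + cosh pqx*₂ − p² cosh qx*₃ = 0, evaluated pointwise in the Weierstrass data y.) -/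
/-!
Each of the three quotients has the form `(u + v) / (u - v)`, with `u = p(1 - y²), v = 2iy`;
`u = p(1 + y²), v = -2iqy`; `u = 1 + y², v = q(1 - y²)`. For such a quotient
`cos arg = (‖u‖² - ‖v‖²) / ‖u² - v²‖` and, by the parallelogram law,
`cosh log |·| = (‖u‖² + ‖v‖²) / ‖u² - v²‖`. When `p² + q² = 1` the three values of `u² - v²`
coincide, and over this common denominator the numerators cancel identically.
-/

open ComplexConjugate

namespace Complex

lemma norm_add_mul_norm_sub (u v : ℂ) : ‖u + v‖ * ‖u - v‖ = ‖u ^ 2 - v ^ 2‖ := by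
  rw [sq_sub_sq, norm_mul]

lemma add_ne_zero_and_sub_ne_zero {u v : ℂ} (h : u ^ 2 ≠ v ^ 2) : u + v ≠ 0 ∧ u - v ≠ 0 := by
  rw [← mul_ne_zero_iff, ← sq_sub_sq]
  exact sub_ne_zero.mpr h

lemma re_add_mul_conj_sub (u v : ℂ) : ((u + v) * conj (u - v)).re = ‖u‖ ^ 2 - ‖v‖ ^ 2 := by
  simp only [Complex.sq_norm, normSq_apply, mul_re, conj_re, conj_im, add_re, add_im, sub_re,
    sub_im]
  ring

lemma cos_arg_add_div_sub {u v : ℂ} (h : u ^ 2 ≠ v ^ 2) :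
    Real.cos (arg ((u + v) / (u - v))) = (‖u‖ ^ 2 - ‖v‖ ^ 2) / ‖u ^ 2 - v ^ 2‖ := by
  obtain ⟨hadd, hsub⟩ := add_ne_zero_and_sub_ne_zero h
  rw [cos_arg (div_ne_zero hadd hsub), div_re, ← norm_add_mul_norm_sub, norm_div,
    ← re_add_mul_conj_sub, normSq_eq_norm_sq]
  simp only [mul_re, conj_re, conj_im]
  field_simp
  ring

lemma cosh_log_norm_add_div_norm_sub {u v : ℂ} (h : u ^ 2 ≠ v ^ 2) :
    Real.cosh (Real.log (‖u + v‖ / ‖u - v‖)) = (‖u‖ ^ 2 + ‖v‖ ^ 2) / ‖u ^ 2 - v ^ 2‖ := by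
  obtain ⟨hadd, hsub⟩ := add_ne_zero_and_sub_ne_zero h
  rw [Real.cosh_log (div_pos (norm_pos_iff.mpr hadd) (norm_pos_iff.mpr hsub)),
    ← norm_add_mul_norm_sub]
  field_simp
  linear_combination parallelogram_law_with_norm ℝ u v

lemma cosh_log_norm_sub_div_norm_add {u v : ℂ} (h : u ^ 2 ≠ v ^ 2) :
    Real.cosh (Real.log (‖u - v‖ / ‖u + v‖)) = (‖u‖ ^ 2 + ‖v‖ ^ 2) / ‖u ^ 2 - v ^ 2‖ := by
  rw [← inv_div, Real.log_inv, Real.cosh_neg, cosh_log_norm_add_div_norm_sub h]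

end Complex

open Complex

theorem maximal_surface_implicit_general
    (p q : ℝ)
    (hpq : p ^ 2 + q ^ 2 = 1)
    (y : ℂ)
    (h₁ : (p : ℂ) * (1 - y ^ 2) + 2 * Complex.I * y ≠ 0)
    (h₂ : (p : ℂ) * (1 - y ^ 2) - 2 * Complex.I * y ≠ 0) :
    q ^ 2 * Real.cos (Complex.arg
        (((p : ℂ) * (1 - y ^ 2) + 2 * Complex.I * y) /
          ((p : ℂ) * (1 - y ^ 2) - 2 * Complex.I * y)))
      + Real.cosh (Real.log
          (‖(p : ℂ) * (1 + y ^ 2) - 2 * Complex.I * (q : ℂ) * y‖ /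
            ‖(p : ℂ) * (1 + y ^ 2) + 2 * Complex.I * (q : ℂ) * y‖))
      - p ^ 2 * Real.cosh (Real.log
          (‖(1 + y ^ 2) + (q : ℂ) * (1 - y ^ 2)‖ /
            ‖(1 + y ^ 2) - (q : ℂ) * (1 - y ^ 2)‖)) = 0 := by
  have hpq' : (p : ℂ) ^ 2 + (q : ℂ) ^ 2 = 1 := by exact_mod_cast hpq
  have hA : (p * (1 - y ^ 2)) ^ 2 - (2 * I * y) ^ 2 ≠ 0 := by
    rw [sq_sub_sq]
    exact mul_ne_zero h₁ h₂
  have hC : (p * (1 + y ^ 2)) ^ 2 - (2 * I * q * y) ^ 2 =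
      (p * (1 - y ^ 2)) ^ 2 - (2 * I * y) ^ 2 := by
    linear_combination (4 * y ^ 2) * hpq' + (4 * y ^ 2 * (1 - (q : ℂ) ^ 2)) * I_sq
  have hE : (1 + y ^ 2) ^ 2 - (q * (1 - y ^ 2)) ^ 2 =
      (p * (1 - y ^ 2)) ^ 2 - (2 * I * y) ^ 2 := by
    linear_combination (-(1 - y ^ 2) ^ 2) * hpq' + (4 * y ^ 2) * I_sq
  rw [cos_arg_add_div_sub (sub_ne_zero.mp hA),
    cosh_log_norm_sub_div_norm_add (sub_ne_zero.mp (hC ▸ hA)),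
    cosh_log_norm_add_div_norm_sub (sub_ne_zero.mp (hE ▸ hA)), hC, hE]
  simp only [norm_mul, norm_real, norm_I, Real.norm_eq_abs, mul_pow, sq_abs]
  ring

/-- **Implicit representation (impl2hyp), case p < 1, of the maximal surface dual to the
2-sheeted hyperboloid**, evaluated pointwise in the Kobayashi–Weierstrass data `y`:
`q² cos px*₁ + cosh pqx*₂ − p² cosh qx*₃ = 0`. -/
theorem maximal_surface_implicit
    (p q : ℝ) (hp : p ∈ Set.Ioo (0 : ℝ) 1) (hq : q ∈ Set.Ioo (0 : ℝ) 1)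
    (hpq : p ^ 2 + q ^ 2 = 1)
    (y : ℂ)
    (h₁ : (p : ℂ) * (1 - y ^ 2) + 2 * Complex.I * y ≠ 0)
    (h₂ : (p : ℂ) * (1 - y ^ 2) - 2 * Complex.I * y ≠ 0) :
    q ^ 2 * Real.cos (Complex.arg
        (((p : ℂ) * (1 - y ^ 2) + 2 * Complex.I * y) /
          ((p : ℂ) * (1 - y ^ 2) - 2 * Complex.I * y)))
      + Real.cosh (Real.log
          (‖(p : ℂ) * (1 + y ^ 2) - 2 * Complex.I * (q : ℂ) * y‖ /
            ‖(p : ℂ) * (1 + y ^ 2) + 2 * Complex.I * (q : ℂ) * y‖))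
      - p ^ 2 * Real.cosh (Real.log
          (‖(1 + y ^ 2) + (q : ℂ) * (1 - y ^ 2)‖ /
            ‖(1 + y ^ 2) - (q : ℂ) * (1 - y ^ 2)‖)) = 0 :=
  maximal_surface_implicit_general p q hpq y h₁ h₂
end

section
/- Let F = (F₁, F₂) and G = (G₁, G₂) be real-analytic maps ℝ² → ℝ² which both satisfy the para-complex Cauchy–Riemann equations ∂F₁/∂u = ∂F₂/∂v and ∂F₂/∂u = ∂F₁/∂v (and likewise for G) on all of ℝ². If F(u, 0) = G(u, 0) for all u ∈ ℝ, then F = G on all of ℝ². In particular, a real analytic function on ℝ has at most one 𝕃-analytic (real-analytic para-holomorphic) extension to ℝ². (Paper: uniqueness part of Lemma A.1.) -/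
/-!
In the null coordinates `u + v`, `u - v` the para-complex Cauchy–Riemann equations decouple:
`F₁ + F₂` has zero derivative in the direction `(1, -1)` and `F₁ - F₂` in the direction `(1, 1)`,
so `F₁ + F₂` is a function of `u + v` alone and `F₁ - F₂` of `u - v` alone. Both are therefore
determined by their values on the real axis, and so are `F₁` and `F₂`.
-/

theorem Differentiable.apply_add_smul_eq_of_fderiv_apply_eq_zero
    {E F : Type*} [NormedAddCommGroup E] [NormedSpace ℝ E]
    [NormedAddCommGroup F] [NormedSpace ℝ F] {f : E → F} (hf : Differentiable ℝ f) {d : E}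
    (h : ∀ p, fderiv ℝ f p d = 0) (p : E) (t : ℝ) : f (p + t • d) = f p := by
  have hline : ∀ s : ℝ, HasDerivAt (fun s : ℝ => f (p + s • d)) 0 s := fun s => by
    have hpath : HasDerivAt (fun s : ℝ => p + s • d) d s := by
      simpa using ((hasDerivAt_id s).smul_const d).const_add p
    have hcomp := (hf _).hasFDerivAt.comp_hasDerivAt s hpath
    rwa [h] at hcomp
  simpa using is_const_of_deriv_eq_zero (fun s => (hline s).differentiableAt)
    (fun s => (hline s).deriv) t 0

section ParaCauchyRiemann

variable {F : ℝ × ℝ → ℝ × ℝ} (hF : Differentiable ℝ F)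
  (hCR1 : ∀ p : ℝ × ℝ,
    fderiv ℝ (fun q => (F q).1) p (1, 0) = fderiv ℝ (fun q => (F q).2) p (0, 1))
  (hCR2 : ∀ p : ℝ × ℝ,
    fderiv ℝ (fun q => (F q).2) p (1, 0) = fderiv ℝ (fun q => (F q).1) p (0, 1))
include hF hCR1 hCR2

theorem fderiv_fst_add_snd_apply_eq_zero (p : ℝ × ℝ) :
    fderiv ℝ (fun q => (F q).1 + (F q).2) p (1, -1) = 0 := by
  have hdir : ((1 : ℝ), (-1 : ℝ)) = (1, 0) - (0, 1) := by simp
  rw [fderiv_fun_add (hF.fst p) (hF.snd p), hdir, map_sub, add_apply, add_apply,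
    hCR1, hCR2]
  ring

theorem fderiv_fst_sub_snd_apply_eq_zero (p : ℝ × ℝ) :
    fderiv ℝ (fun q => (F q).1 - (F q).2) p (1, 1) = 0 := by
  have hdir : ((1 : ℝ), (1 : ℝ)) = (1, 0) + (0, 1) := by simp
  rw [fderiv_fun_sub (hF.fst p) (hF.snd p), hdir, map_add, sub_apply, sub_apply,
    hCR1, hCR2]
  ring

theorem fst_add_snd_eq_on_axis (u v : ℝ) :
    (F (u, v)).1 + (F (u, v)).2 = (F (u + v, 0)).1 + (F (u + v, 0)).2 := by
  simpa using (hF.fst.add hF.snd).apply_add_smul_eq_of_fderiv_apply_eq_zero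
    (fderiv_fst_add_snd_apply_eq_zero hF hCR1 hCR2) (u + v, 0) (-v)

theorem fst_sub_snd_eq_on_axis (u v : ℝ) :
    (F (u, v)).1 - (F (u, v)).2 = (F (u - v, 0)).1 - (F (u - v, 0)).2 := by
  simpa using (hF.fst.sub hF.snd).apply_add_smul_eq_of_fderiv_apply_eq_zero
    (fderiv_fst_sub_snd_apply_eq_zero hF hCR1 hCR2) (u - v, 0) v

end ParaCauchyRiemann

/-- **Uniqueness part of Lemma A.1.** Two real-analytic maps `ℝ² → ℝ²` satisfying the
para-complex Cauchy–Riemann equations which agree on the real axis agree everywhere; in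
particular a real-analytic function on `ℝ` has at most one 𝕃-analytic extension. -/
theorem paraholomorphic_extension_unique
    (F G : ℝ × ℝ → ℝ × ℝ)
    (hF : AnalyticOnNhd ℝ F Set.univ) (hG : AnalyticOnNhd ℝ G Set.univ)
    (hFCR1 : ∀ p : ℝ × ℝ,
      fderiv ℝ (fun q => (F q).1) p (1, 0) = fderiv ℝ (fun q => (F q).2) p (0, 1))
    (hFCR2 : ∀ p : ℝ × ℝ,
      fderiv ℝ (fun q => (F q).2) p (1, 0) = fderiv ℝ (fun q => (F q).1) p (0, 1))
    (hGCR1 : ∀ p : ℝ × ℝ,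
      fderiv ℝ (fun q => (G q).1) p (1, 0) = fderiv ℝ (fun q => (G q).2) p (0, 1))
    (hGCR2 : ∀ p : ℝ × ℝ,
      fderiv ℝ (fun q => (G q).2) p (1, 0) = fderiv ℝ (fun q => (G q).1) p (0, 1))
    (hax : ∀ u : ℝ, F (u, 0) = G (u, 0)) :
    F = G := by
  have hFd : Differentiable ℝ F := fun p => (hF p trivial).differentiableAt
  have hGd : Differentiable ℝ G := fun p => (hG p trivial).differentiableAt
  funext ⟨u, v⟩
  have hsum : (F (u, v)).1 + (F (u, v)).2 = (G (u, v)).1 + (G (u, v)).2 := by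
    rw [fst_add_snd_eq_on_axis hFd hFCR1 hFCR2, fst_add_snd_eq_on_axis hGd hGCR1 hGCR2, hax]
  have hdiff : (F (u, v)).1 - (F (u, v)).2 = (G (u, v)).1 - (G (u, v)).2 := by
    rw [fst_sub_snd_eq_on_axis hFd hFCR1 hFCR2, fst_sub_snd_eq_on_axis hGd hGCR1 hGCR2, hax]
  ext <;> linarith
end

section
/- Let I ⊆ ℝ be an open interval, r, h, H : I → ℝ differentiable with r > 0 and H′ = h′/r² on I. Define x, x* : I × ℝ → ℝ³ by x(u, v) = (r(u) cos v, r(u) sin v, h(u)) and x*(u, v) = (−cos v / r(u), −sin v / r(u), H(u)). Then x*_u = (1/r²) x_u and x*_v = −(1/r²) x_v at every point, and B(x_u, x_v) = 0 both for the Euclidean inner product B(x,y) = x₁y₁ + x₂y₂ + x₃y₃ and for the Minkowski form B_M(x,y) = x₁y₁ + x₂y₂ − x₃y₃; hence (x, x*) is a Christoffel pair (the surface of revolution and its dual) simultaneously in Euclidean and in Minkowski space, so the Minkowski Christoffel dual of a surface of revolution with timelike axis coincides with its Euclidean dual. (Paper: Section 3, computation for surfaces of revolution and the catenoid.) -/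
/-- The Euclidean inner product on `ℝ³`. -/
def BE (x y : ℝ × ℝ × ℝ) : ℝ := x.1 * y.1 + x.2.1 * y.2.1 + x.2.2 * y.2.2

/-!
The dual `x*` is again a surface of revolution, with profile `(-1/r, H)`, and
`(-1/r)' = r'/r²`. For any surface of revolution `x_u = (r' cos v, r' sin v, h')` and
`x_v = r (-sin v, cos v, 0)`; since `x_v` has no axial component, `x_u ⊥ x_v` for the Euclidean
and the Minkowski form alike. Partial derivatives are computed as derivatives along the
coordinate lines.
-/

open Real

lemma pdu_eq_of_hasDerivAt {x : ℝ × ℝ → ℝ × ℝ × ℝ} {u v : ℝ} {w : ℝ × ℝ × ℝ}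
    (hx : DifferentiableAt ℝ x (u, v)) (hw : HasDerivAt (fun t => x (t, v)) w u) :
    pdu x (u, v) = w := by
  have hline : HasDerivAt (fun t : ℝ => (t, v)) ((1 : ℝ), (0 : ℝ)) u :=
    (hasDerivAt_id u).prodMk (hasDerivAt_const u v)
  exact (hx.hasFDerivAt.comp_hasDerivAt u hline).unique hw

lemma pdv_eq_of_hasDerivAt {x : ℝ × ℝ → ℝ × ℝ × ℝ} {u v : ℝ} {w : ℝ × ℝ × ℝ}
    (hx : DifferentiableAt ℝ x (u, v)) (hw : HasDerivAt (fun t => x (u, t)) w v) :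
    pdv x (u, v) = w := by
  have hline : HasDerivAt (fun t : ℝ => (u, t)) ((0 : ℝ), (1 : ℝ)) v :=
    (hasDerivAt_const v u).prodMk (hasDerivAt_id v)
  exact (hx.hasFDerivAt.comp_hasDerivAt v hline).unique hw

noncomputable def surfaceOfRevolution (r h : ℝ → ℝ) (p : ℝ × ℝ) : ℝ × ℝ × ℝ :=
  (r p.1 * cos p.2, r p.1 * sin p.2, h p.1)

section
variable {r h H : ℝ → ℝ} {u : ℝ}

lemma differentiableAt_surfaceOfRevolution (hr : DifferentiableAt ℝ r u)
    (hh : DifferentiableAt ℝ h u) (v : ℝ) :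
    DifferentiableAt ℝ (surfaceOfRevolution r h) (u, v) := by
  unfold surfaceOfRevolution
  fun_prop

lemma pdu_surfaceOfRevolution (hr : DifferentiableAt ℝ r u) (hh : DifferentiableAt ℝ h u)
    (v : ℝ) :
    pdu (surfaceOfRevolution r h) (u, v) = (deriv r u * cos v, deriv r u * sin v, deriv h u) :=
  pdu_eq_of_hasDerivAt (differentiableAt_surfaceOfRevolution hr hh v)
    ((hr.hasDerivAt.mul_const (cos v)).prodMk
      ((hr.hasDerivAt.mul_const (sin v)).prodMk hh.hasDerivAt))

lemma pdv_surfaceOfRevolution (hr : DifferentiableAt ℝ r u) (hh : DifferentiableAt ℝ h u)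
    (v : ℝ) :
    pdv (surfaceOfRevolution r h) (u, v) = (-(r u * sin v), r u * cos v, 0) := by
  have hw := ((hasDerivAt_cos v).const_mul (r u)).prodMk
    (((hasDerivAt_sin v).const_mul (r u)).prodMk (hasDerivAt_const v (h u)))
  rw [mul_neg] at hw
  exact pdv_eq_of_hasDerivAt (differentiableAt_surfaceOfRevolution hr hh v) hw

lemma BE_pdu_pdv_surfaceOfRevolution (hr : DifferentiableAt ℝ r u) (hh : DifferentiableAt ℝ h u)
    (v : ℝ) :
    BE (pdu (surfaceOfRevolution r h) (u, v)) (pdv (surfaceOfRevolution r h) (u, v)) = 0 := by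
  rw [pdu_surfaceOfRevolution hr hh, pdv_surfaceOfRevolution hr hh, BE]
  ring

lemma BM_pdu_pdv_surfaceOfRevolution (hr : DifferentiableAt ℝ r u) (hh : DifferentiableAt ℝ h u)
    (v : ℝ) :
    BM (pdu (surfaceOfRevolution r h) (u, v)) (pdv (surfaceOfRevolution r h) (u, v)) = 0 := by
  rw [pdu_surfaceOfRevolution hr hh, pdv_surfaceOfRevolution hr hh, BM]
  ring


lemma hasDerivAt_neg_inv (hr : DifferentiableAt ℝ r u) (hr0 : r u ≠ 0) :
    HasDerivAt (fun t => -(r t)⁻¹) (deriv r u / r u ^ 2) u := by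
  have hneg := (hr.hasDerivAt.inv hr0).neg
  rwa [neg_div, neg_neg] at hneg

lemma pdu_surfaceOfRevolution_dual (hr : DifferentiableAt ℝ r u) (hh : DifferentiableAt ℝ h u)
    (hH : DifferentiableAt ℝ H u) (hr0 : r u ≠ 0) (hH' : deriv H u = deriv h u / r u ^ 2)
    (v : ℝ) :
    pdu (surfaceOfRevolution (fun t => -(r t)⁻¹) H) (u, v) =
      (1 / r u ^ 2) • pdu (surfaceOfRevolution r h) (u, v) := by
  have hρ := hasDerivAt_neg_inv hr hr0
  rw [pdu_surfaceOfRevolution hρ.differentiableAt hH, hρ.deriv, hH',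
    pdu_surfaceOfRevolution hr hh]
  ext <;> simp only [Prod.smul_fst, Prod.smul_snd, smul_eq_mul] <;> ring

lemma pdv_surfaceOfRevolution_dual (hr : DifferentiableAt ℝ r u) (hh : DifferentiableAt ℝ h u)
    (hH : DifferentiableAt ℝ H u) (hr0 : r u ≠ 0) (v : ℝ) :
    pdv (surfaceOfRevolution (fun t => -(r t)⁻¹) H) (u, v) =
      -(1 / r u ^ 2) • pdv (surfaceOfRevolution r h) (u, v) := by
  rw [pdv_surfaceOfRevolution (hasDerivAt_neg_inv hr hr0).differentiableAt hH,
    pdv_surfaceOfRevolution hr hh]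
  ext <;> simp only [Prod.smul_fst, Prod.smul_snd, smul_eq_mul, mul_zero] <;> field_simp

end

theorem surface_of_revolution_dual_general
    (I : Set ℝ)
    (r h H : ℝ → ℝ)
    (hr : ∀ u ∈ I, DifferentiableAt ℝ r u)
    (hh : ∀ u ∈ I, DifferentiableAt ℝ h u)
    (hH : ∀ u ∈ I, DifferentiableAt ℝ H u)
    (hrpos : ∀ u ∈ I, 0 < r u)
    (hH' : ∀ u ∈ I, deriv H u = deriv h u / (r u) ^ 2)
    (x xs : ℝ × ℝ → ℝ × ℝ × ℝ)
    (hx : ∀ u v : ℝ, x (u, v) = (r u * Real.cos v, r u * Real.sin v, h u))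
    (hxs : ∀ u v : ℝ, xs (u, v) = (-Real.cos v / r u, -Real.sin v / r u, H u)) :
    ∀ u ∈ I, ∀ v : ℝ,
      pdu xs (u, v) = (1 / (r u) ^ 2) • pdu x (u, v) ∧
      pdv xs (u, v) = -(1 / (r u) ^ 2) • pdv x (u, v) ∧
      BE (pdu x (u, v)) (pdv x (u, v)) = 0 ∧
      BM (pdu x (u, v)) (pdv x (u, v)) = 0 := by
  intro u hu v
  obtain rfl : x = surfaceOfRevolution r h := funext fun p => hx p.1 p.2
  obtain rfl : xs = surfaceOfRevolution (fun t => -(r t)⁻¹) H :=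
    funext fun p => by rw [hxs, surfaceOfRevolution]; ext <;> simp only [neg_div] <;> ring
  have hr0 := (hrpos u hu).ne'
  exact ⟨pdu_surfaceOfRevolution_dual (hr u hu) (hh u hu) (hH u hu) hr0 (hH' u hu) v,
    pdv_surfaceOfRevolution_dual (hr u hu) (hh u hu) (hH u hu) hr0 v,
    BE_pdu_pdv_surfaceOfRevolution (hr u hu) (hh u hu) v,
    BM_pdu_pdv_surfaceOfRevolution (hr u hu) (hh u hu) v⟩

/-- **Section 3.** A surface of revolution `x(u,v) = (r cos v, r sin v, h)` and its dual
`x*(u,v) = (−cos v/r, −sin v/r, H)` (with `H′ = h′/r²`) satisfy `x*_u = (1/r²) x_u`,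
`x*_v = −(1/r²) x_v`, and the parameter lines are orthogonal simultaneously for the
Euclidean and the Minkowski inner product; hence `(x, x*)` is a Christoffel pair in both
geometries, so the Minkowski Christoffel dual of a surface of revolution with timelike
axis coincides with its Euclidean dual. -/
theorem surface_of_revolution_dual
    (a b : ℝ) (I : Set ℝ) (hI : I = Set.Ioo a b)
    (r h H : ℝ → ℝ)
    (hr : ∀ u ∈ I, DifferentiableAt ℝ r u)
    (hh : ∀ u ∈ I, DifferentiableAt ℝ h u)
    (hH : ∀ u ∈ I, DifferentiableAt ℝ H u)
    (hrpos : ∀ u ∈ I, 0 < r u)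
    (hH' : ∀ u ∈ I, deriv H u = deriv h u / (r u) ^ 2)
    (x xs : ℝ × ℝ → ℝ × ℝ × ℝ)
    (hx : ∀ u v : ℝ, x (u, v) = (r u * Real.cos v, r u * Real.sin v, h u))
    (hxs : ∀ u v : ℝ, xs (u, v) = (-Real.cos v / r u, -Real.sin v / r u, H u)) :
    ∀ u ∈ I, ∀ v : ℝ,
      pdu xs (u, v) = (1 / (r u) ^ 2) • pdu x (u, v) ∧
      pdv xs (u, v) = -(1 / (r u) ^ 2) • pdv x (u, v) ∧
      BE (pdu x (u, v)) (pdv x (u, v)) = 0 ∧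
      BM (pdu x (u, v)) (pdv x (u, v)) = 0 :=
  surface_of_revolution_dual_general I r h H hr hh hH hrpos hH' x xs hx hxs
end
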